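/- arXiv:1911.04865 — 5 statements merged into one kernel-verified Lean document; each statement's English description precedes it below -/
import Mathlib

section
/- Let k and n be integers with 3 ≤ k < n. Let F be a distribution function on [0,1] with quantile function Q, and assume Q is (k−2)-times continuously differentiable on [0,1]. Define β : [0,1] → ℝ by β(x) = x + Σ_{i=1}^{k−2} C(k−2,i) · ((n−k)!/(n−k+i)!) · F(x)^i · Q^{(i)}(F(x)), where Q^{(i)} is the i-th derivative of Q. Then β satisfies the equilibrium equation: for every x ∈ [0,1], ∫₀^x (x − β(y))·F(y)^{n−k}·(F(x) − F(y))^{k−3}·f(y) dy = 0. -/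
open MeasureTheory intervalIntegral Set

/-!
Put `s = F x`, `p = n - k`, `m = k - 3` and `g t = (x - Q t) * t ^ (p + m + 1)`. By Leibniz' rule
`t ^ p * (x - β (Q t)) = p! / (p + m + 1)! * g⁽ᵐ⁺¹⁾ t`, so after the substitution `t = F y` the
integral is a multiple of `∫₀ˢ (s - t) ^ m * g⁽ᵐ⁺¹⁾ t dt`, the integral remainder of the Taylor
expansion of `g` of order `m` at `0`. That remainder is `g s` minus the Taylor polynomial: the
polynomial vanishes because `t ^ (p + m + 1)` kills all derivatives of order `≤ m` at `0`, and
`g s = 0` because `Q (F x) = x`.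
-/

theorem integral_sub_pow_mul_iteratedDerivWithin_eq_zero {g : ℝ → ℝ} {a b : ℝ} (n : ℕ)
    (hg : ContDiffOn ℝ (n + 1 : ℕ) g (uIcc a b))
    (ha : ∀ j ≤ n, iteratedDerivWithin j g (uIcc a b) a = 0) (hb : g b = 0) :
    ∫ t in a..b, (b - t) ^ n * iteratedDerivWithin (n + 1) g (uIcc a b) t = 0 := by
  have h := taylor_integral_remainder hg
  rw [taylor_within_apply, Finset.sum_eq_zero fun j hj => by
    rw [ha j (Finset.mem_range_succ_iff.1 hj), smul_zero], hb, sub_zero] at h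
  simp only [smul_eq_mul, div_mul_eq_mul_div, intervalIntegral.integral_div] at h
  exact (div_eq_zero_iff.1 h.symm).resolve_right (by positivity)

theorem ContDiffOn.continuousOn_sub_pow_mul_iteratedDerivWithin {g : ℝ → ℝ} {a b : ℝ} (n : ℕ)
    (hab : a ≠ b) (hg : ContDiffOn ℝ (n + 1 : ℕ) g (uIcc a b)) :
    ContinuousOn (fun t => (b - t) ^ n * iteratedDerivWithin (n + 1) g (uIcc a b) t) (uIcc a b) :=
  (by fun_prop : Continuous fun t : ℝ => (b - t) ^ n).continuousOn.mul
    (hg.continuousOn_iteratedDerivWithin le_rfl (uniqueDiffOn_uIcc hab))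

theorem integral_comp_mul_deriv_of_monotoneOn {F f φ : ℝ → ℝ} {a b : ℝ} (hab : a ≤ b)
    (hF : ∀ y ∈ Icc a b, HasDerivAt F (f y) y) (hf : ContinuousOn f (Icc a b))
    (hFm : MonotoneOn F (Icc a b)) (hφ : ContinuousOn φ (Icc (F a) (F b))) :
    ∫ y in a..b, φ (F y) * f y = ∫ t in F a..F b, φ t := by
  have himg : F '' uIcc a b ⊆ Icc (F a) (F b) := uIcc_of_le hab ▸ hFm.image_Icc_subset
  rw [← uIcc_of_le hab] at hF hf
  exact integral_comp_mul_deriv'' (fun y hy => (hF y hy).continuousAt.continuousWithinAt)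
    (fun y hy => (hF y (Ioo_subset_Icc_self hy)).hasDerivWithinAt) hf (hφ.mono himg)

theorem strictMonoOn_Icc_of_hasDerivAt_pos {F f : ℝ → ℝ} {a b : ℝ}
    (hF : ∀ x ∈ Icc a b, HasDerivAt F (f x) x) (hf : ∀ x ∈ Icc a b, 0 < f x) :
    StrictMonoOn F (Icc a b) :=
  strictMonoOn_of_hasDerivWithinAt_pos (convex_Icc a b)
    (fun y hy => (hF y hy).continuousAt.continuousWithinAt)
    (fun y hy => (hF y (interior_subset hy)).hasDerivWithinAt) (fun y hy => hf y (interior_subset hy))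

theorem iteratedDerivWithin_of_mem_nhds {𝕜 : Type*} [NontriviallyNormedField 𝕜] {E : Type*}
    [NormedAddCommGroup E] [NormedSpace 𝕜 E] {f : 𝕜 → E} {s : Set 𝕜} {t : 𝕜} (n : ℕ)
    (hs : s ∈ nhds t) : iteratedDerivWithin n f s t = iteratedDeriv n f t := by
  rw [← iteratedDerivWithin_univ, iteratedDerivWithin, iteratedDerivWithin, ← univ_inter s,
    iteratedFDerivWithin_inter hs]

section Leibniz

variable {𝕜 : Type*} [NontriviallyNormedField 𝕜] {s : Set 𝕜} {t : 𝕜} {h : 𝕜 → 𝕜} {m N : ℕ}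

theorem iteratedDerivWithin_mul_pow (hs : UniqueDiffOn 𝕜 s) (ht : t ∈ s)
    (hh : ContDiffWithinAt 𝕜 m h s t) :
    iteratedDerivWithin m (fun u => h u * u ^ N) s t = ∑ i ∈ Finset.range (m + 1),
      m.choose i * iteratedDerivWithin i h s t * (N.descFactorial (m - i) * t ^ (N - (m - i))) := by
  simp_rw [← iteratedDerivWithin_pow ht hs]
  exact iteratedDerivWithin_mul ht hs hh (by fun_prop)

theorem iteratedDerivWithin_mul_pow_zero (hs : UniqueDiffOn 𝕜 s) (h0 : 0 ∈ s)
    (hh : ContDiffWithinAt 𝕜 m h s 0) (hmN : m < N) :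
    iteratedDerivWithin m (fun u => h u * u ^ N) s 0 = 0 := by
  rw [iteratedDerivWithin_mul_pow hs h0 hh]
  refine Finset.sum_eq_zero fun i _ => ?_
  rw [zero_pow (by omega), mul_zero, mul_zero]

end Leibniz

open Nat in
theorem factorial_div_mul_descFactorial_sub {p m i : ℕ} (hi : i ≤ m) :
    (p ! / (p + m)! : ℝ) * (p + m).descFactorial (m - i) = p ! / (p + i)! := by
  have h := Nat.factorial_mul_descFactorial (n := p + m) (k := m - i) (by omega)
  rw [show p + m - (m - i) = p + i by omega] at h
  rw [div_mul_eq_mul_div, div_eq_div_iff (by positivity) (by positivity), ← h]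
  push_cast
  ring

open Nat in
theorem factorial_div_mul_iteratedDeriv_sub_mul_pow (p m : ℕ) {Q : ℝ → ℝ} {x t : ℝ}
    (hQ : ContDiffAt ℝ m Q t) :
    (p ! / (p + m)! : ℝ) * iteratedDeriv m (fun u => (x - Q u) * u ^ (p + m)) t =
      (x - Q t - ∑ i ∈ Finset.Icc 1 m,
        (m.choose i : ℝ) * (p ! / (p + i)! : ℝ) * t ^ i * iteratedDeriv i Q t) * t ^ p := by
  simp only [← iteratedDerivWithin_univ]
  rw [iteratedDerivWithin_mul_pow uniqueDiffOn_univ (mem_univ t)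
      (contDiffWithinAt_const.sub hQ.contDiffWithinAt), Finset.mul_sum,
    Finset.range_eq_Ico, Finset.sum_eq_sum_Ico_succ_bot (by omega), Finset.Ico_add_one_right_eq_Icc,
    sub_mul, sub_eq_add_neg _ (Finset.sum _ _ * _), Finset.sum_mul, ← Finset.sum_neg_distrib]
  congr 1
  · have h0 := factorial_div_mul_descFactorial_sub (p := p) (Nat.zero_le m)
    rw [Nat.sub_zero, add_zero, div_self (by positivity)] at h0
    simp only [Nat.choose_zero_right, Nat.cast_one, one_mul, iteratedDerivWithin_zero,
      Nat.sub_zero, Nat.add_sub_cancel]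
    linear_combination (x - Q t) * t ^ p * h0
  · refine Finset.sum_congr rfl fun i hi => ?_
    obtain ⟨hi1, him⟩ := Finset.mem_Icc.1 hi
    rw [iteratedDerivWithin_const_sub (by omega), iteratedDerivWithin_fun_neg,
      show p + m - (m - i) = p + i by omega, pow_add]
    linear_combination (-(m.choose i : ℝ) * iteratedDerivWithin i Q univ t * t ^ p * t ^ i) *
      factorial_div_mul_descFactorial_sub (p := p) him

theorem integral_sub_pow_mul_iteratedDerivWithin_sub_mul_pow_eq_zero {Q : ℝ → ℝ} {x s : ℝ}
    {m N : ℕ} (hs : s ≠ 0) (hmN : m < N) (hQ : ContDiffOn ℝ (m + 1 : ℕ) Q (uIcc 0 s))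
    (hQs : Q s = x) :
    ∫ t in 0..s, (s - t) ^ m *
      iteratedDerivWithin (m + 1) (fun u => (x - Q u) * u ^ N) (uIcc 0 s) t = 0 := by
  have hxQ : ContDiffOn ℝ (m + 1 : ℕ) (fun u => x - Q u) (uIcc 0 s) := contDiffOn_const.sub hQ
  refine integral_sub_pow_mul_iteratedDerivWithin_eq_zero m (hxQ.mul (by fun_prop))
    (fun j hj => ?_) (by simp [hQs])
  exact iteratedDerivWithin_mul_pow_zero (uniqueDiffOn_uIcc hs.symm) left_mem_uIcc
    ((hxQ.of_le (by exact_mod_cast hj.trans m.le_succ)) 0 left_mem_uIcc) (by omega)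

theorem kth_price_bid_function_satisfies_equilibrium_general
    (k n : ℕ) (hk : 3 ≤ k)
    (F f Q β : ℝ → ℝ)
    (hF0 : F 0 = 0) (hF1 : F 1 = 1)
    (hFderiv : ∀ x ∈ Icc (0:ℝ) 1, HasDerivAt F (f x) x)
    (hfcont : ContinuousOn f (Icc (0:ℝ) 1))
    (hfpos : ∀ x ∈ Icc (0:ℝ) 1, 0 < f x)
    (hQF : ∀ x ∈ Icc (0:ℝ) 1, Q (F x) = x)
    (hQsmooth : ContDiffOn ℝ (k - 2 : ℕ) Q (Icc (0:ℝ) 1))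
    (hβ : ∀ x ∈ Icc (0:ℝ) 1,
      β x = x + ∑ i ∈ Finset.Icc 1 (k - 2),
        ((k - 2).choose i : ℝ) * (((n - k).factorial : ℝ) / ((n - k + i).factorial : ℝ)) *
          F x ^ i * iteratedDeriv i Q (F x)) :
    ∀ x ∈ Icc (0:ℝ) 1,
      ∫ y in (0:ℝ)..x,
        (x - β y) * F y ^ (n - k) * (F x - F y) ^ (k - 3) * f y = 0 := by
  intro x hx
  rcases hx.1.eq_or_lt with rfl | hx0
  · exact integral_same
  obtain ⟨m, rfl⟩ : ∃ m, k = m + 3 := ⟨k - 3, by omega⟩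
  simp only [show m + 3 - 2 = m + 1 by omega, Nat.add_sub_cancel] at hQsmooth hβ ⊢
  set p := n - (m + 3)
  have hFmono := strictMonoOn_Icc_of_hasDerivAt_pos hFderiv hfpos
  have hxI : Icc 0 x ⊆ Icc 0 1 := Icc_subset_Icc_right hx.2
  set s := F x
  have hs : s ∈ Ioc 0 1 := ⟨hF0 ▸ hFmono ⟨le_rfl, zero_le_one⟩ hx hx0,
    hF1 ▸ hFmono.monotoneOn hx ⟨zero_le_one, le_rfl⟩ hx.2⟩
  have hQs : ContDiffOn ℝ (m + 1 : ℕ) Q (uIcc 0 s) :=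
    hQsmooth.mono (uIcc_of_le hs.1.le ▸ Icc_subset_Icc_right hs.2)
  set φ : ℝ → ℝ := fun t => (s - t) ^ m *
    iteratedDerivWithin (m + 1) (fun u => (x - Q u) * u ^ (p + (m + 1))) (uIcc 0 s) t
  have hφ : ContinuousOn φ (Icc 0 s) := uIcc_of_le hs.1.le ▸
    ((contDiffOn_const.sub hQs).mul (by fun_prop)).continuousOn_sub_pow_mul_iteratedDerivWithin
      m hs.1.ne
  have hpoint : EqOn (fun y => (x - β y) * F y ^ p * (s - F y) ^ m * f y)
      (fun y => (p.factorial / (p + (m + 1)).factorial : ℝ) * (φ (F y) * f y)) (uIoo 0 x) := by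
    intro y hy
    rw [uIoo_of_le hx.1] at hy
    have hyI : y ∈ Icc 0 1 := hxI (Ioo_subset_Icc_self hy)
    have hnhds : uIcc 0 s ∈ nhds (F y) := uIcc_of_le hs.1.le ▸
      Icc_mem_nhds (hF0 ▸ hFmono ⟨le_rfl, zero_le_one⟩ hyI hy.1) (hFmono hyI hx hy.2)
    have key := factorial_div_mul_iteratedDeriv_sub_mul_pow p (m + 1) (x := x)
      (hQs.contDiffAt hnhds)
    rw [hQF y hyI] at key
    simp only [hβ y hyI, φ, iteratedDerivWithin_of_mem_nhds _ hnhds]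
    linear_combination (-(s - F y) ^ m * f y) * key
  calc ∫ y in 0..x, (x - β y) * F y ^ p * (s - F y) ^ m * f y
      = (p.factorial / (p + (m + 1)).factorial : ℝ) * ∫ y in 0..x, φ (F y) * f y := by
        rw [integral_congr_uIoo hpoint, intervalIntegral.integral_const_mul]
    _ = 0 := by
      rw [integral_comp_mul_deriv_of_monotoneOn hx.1 (fun y hy => hFderiv y (hxI hy))
        (hfcont.mono hxI) (hFmono.monotoneOn.mono hxI) (by rwa [hF0]), hF0,
        integral_sub_pow_mul_iteratedDerivWithin_sub_mul_pow_eq_zero hs.1.ne' (by omega) hQs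
          (hQF x hx), mul_zero]

/-- The bid function `β x = x + Σ_{i=1}^{k-2} C(k-2,i) ((n-k)!/(n-k+i)!) F(x)^i Q^{(i)}(F x)`
satisfies the equilibrium equation of the `k`-th price auction with `n` bidders. -/
theorem kth_price_bid_function_satisfies_equilibrium
    (k n : ℕ) (hk : 3 ≤ k) (hkn : k < n)
    (F f Q β : ℝ → ℝ)
    (hF0 : F 0 = 0) (hF1 : F 1 = 1)
    (hFderiv : ∀ x ∈ Icc (0:ℝ) 1, HasDerivAt F (f x) x)
    (hfcont : ContinuousOn f (Icc (0:ℝ) 1))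
    (hfpos : ∀ x ∈ Icc (0:ℝ) 1, 0 < f x)
    (hQF : ∀ x ∈ Icc (0:ℝ) 1, Q (F x) = x)
    (hFQ : ∀ t ∈ Icc (0:ℝ) 1, F (Q t) = t)
    (hQsmooth : ContDiffOn ℝ (k - 2 : ℕ) Q (Icc (0:ℝ) 1))
    (hβ : ∀ x ∈ Icc (0:ℝ) 1,
      β x = x + ∑ i ∈ Finset.Icc 1 (k - 2),
        ((k - 2).choose i : ℝ) * (((n - k).factorial : ℝ) / ((n - k + i).factorial : ℝ)) *
          F x ^ i * iteratedDeriv i Q (F x)) :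
    ∀ x ∈ Icc (0:ℝ) 1,
      ∫ y in (0:ℝ)..x,
        (x - β y) * F y ^ (n - k) * (F x - F y) ^ (k - 3) * f y = 0 :=
  kth_price_bid_function_satisfies_equilibrium_general k n hk F f Q β hF0 hF1 hFderiv hfcont hfpos
    hQF hQsmooth hβ
end

section
/- Let k and n be integers with 3 ≤ k < n, and let Q : ℝ → ℝ be (k−1)-times continuously differentiable on [0,1) with Q^{(i)}(t) > 0 for every i ∈ {1, …, k−1} and every t ∈ [0,1). Then the function b(t) := Q(t) + Σ_{i=1}^{k−2} C(k−2,i) · ((n−k)!/(n−k+i)!) · t^i · Q^{(i)}(t) is strictly increasing on [0,1). -/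
/-!
Differentiating term by term, `b' = Q' + ∑ cᵢ (i tⁱ⁻¹ Q⁽ⁱ⁾ + tⁱ Q⁽ⁱ⁺¹⁾)` on `(0, 1)`. The
coefficients `cᵢ = C(k-2,i) (n-k)!/(n-k+i)!` are nonnegative and `t ≥ 0`, so every summand is
nonnegative while `Q' > 0`; hence `b' > 0` on the interior. Since `b` is continuous on `[0, 1)`
(at `0` the factors `tⁱ` absorb the one-sided behaviour of `Q⁽ⁱ⁾`), `b` is strictly increasing.
-/

open Set

theorem ContDiffAt.hasDerivAt_iteratedDeriv {𝕜 F : Type*} [NontriviallyNormedField 𝕜]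
    [NormedAddCommGroup F] [NormedSpace 𝕜 F] {f : 𝕜 → F} {n : WithTop ℕ∞} {i : ℕ} {x : 𝕜}
    (hf : ContDiffAt 𝕜 n f x) (hi : i < n) :
    HasDerivAt (iteratedDeriv i f) (iteratedDeriv (i + 1) f x) x := by
  rw [iteratedDeriv_succ]
  -- `iteratedDeriv i f` is `iteratedFDeriv 𝕜 i f` evaluated at `(1, …, 1)`.
  exact ((ContinuousMultilinearMap.apply 𝕜 (fun _ : Fin i => 𝕜) F fun _ => 1).differentiableAt.comp
    x (hf.differentiableAt_iteratedFDeriv hi)).hasDerivAt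

section Ico

variable {Q : ℝ → ℝ} {a : ℝ} {n i : ℕ}

/-- The only point of `Ico 0 a` not in its interior is `0`, where `t ^ i` kills the difference. -/
theorem eqOn_pow_mul_iteratedDerivWithin_Ico (hQ : ContDiffOn ℝ n Q (Ico 0 a)) (hi : i ≠ 0)
    (hin : i ≤ n) :
    EqOn (fun t => t ^ i * iteratedDerivWithin i Q (Ico 0 a) t)
      (fun t => t ^ i * iteratedDeriv i Q t) (Ico 0 a) := by
  intro t ht
  rcases ht.1.eq_or_lt with rfl | hpos
  · simp [zero_pow hi]
  · have hQt : ContDiffAt ℝ i Q t :=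
      (hQ.contDiffAt (Ico_mem_nhds hpos ht.2)).of_le (mod_cast hin)
    simp only [iteratedDerivWithin_eq_iteratedDeriv (uniqueDiffOn_Ico 0 a) hQt ht]

theorem continuousOn_pow_mul_iteratedDeriv_Ico (hQ : ContDiffOn ℝ n Q (Ico 0 a)) (hi : i ≠ 0)
    (hin : i ≤ n) :
    ContinuousOn (fun t => t ^ i * iteratedDeriv i Q t) (Ico 0 a) :=
  ((continuousOn_pow i).mul (hQ.continuousOn_iteratedDerivWithin (mod_cast hin)
    (uniqueDiffOn_Ico 0 a))).congr (eqOn_pow_mul_iteratedDerivWithin_Ico hQ hi hin).symm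

theorem strictMonoOn_add_sum_mul_pow_mul_iteratedDeriv_Ico {m : ℕ} {c : ℕ → ℝ}
    (hc : ∀ i ∈ Finset.Icc 1 m, 0 ≤ c i) (hQ : ContDiffOn ℝ (m + 1 : ℕ) Q (Ico 0 a))
    (hpos : ∀ i ∈ Finset.Icc 1 (m + 1), ∀ t ∈ Ico 0 a, 0 < iteratedDeriv i Q t) :
    StrictMonoOn (fun t => Q t + ∑ i ∈ Finset.Icc 1 m, c i * t ^ i * iteratedDeriv i Q t)
      (Ico 0 a) := by
  have hcont : ContinuousOn
      (fun t => Q t + ∑ i ∈ Finset.Icc 1 m, c i * t ^ i * iteratedDeriv i Q t) (Ico 0 a) := by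
    refine hQ.continuousOn.add (continuousOn_finsetSum _ fun i hi => ?_)
    rw [Finset.mem_Icc] at hi
    exact (continuousOn_const.mul
      (continuousOn_pow_mul_iteratedDeriv_Ico hQ (by omega) (by omega))).congr
        fun t _ => mul_assoc _ _ _
  refine strictMonoOn_of_deriv_pos (convex_Ico 0 a) hcont fun x hx => ?_
  rw [interior_Ico] at hx
  have hD : ∀ i ≤ m, HasDerivAt (iteratedDeriv i Q) (iteratedDeriv (i + 1) Q x) x :=
    fun i hi => (hQ.contDiffAt (Ico_mem_nhds hx.1 hx.2)).hasDerivAt_iteratedDeriv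
      (mod_cast Nat.lt_succ_of_le hi)
  have hb : HasDerivAt (fun t => Q t + ∑ i ∈ Finset.Icc 1 m, c i * t ^ i * iteratedDeriv i Q t)
      (iteratedDeriv 1 Q x + ∑ i ∈ Finset.Icc 1 m,
        (c i * (i * x ^ (i - 1)) * iteratedDeriv i Q x + c i * x ^ i * iteratedDeriv (i + 1) Q x))
      x := by
    have hQ' : HasDerivAt Q (iteratedDeriv 1 Q x) x := by
      simpa only [iteratedDeriv_zero] using hD 0 (Nat.zero_le m)
    refine hQ'.add (HasDerivAt.fun_sum fun i hi => ?_)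
    exact ((hasDerivAt_pow i x).const_mul (c i)).mul (hD i (Finset.mem_Icc.1 hi).2)
  rw [hb.deriv]
  have hx' : x ∈ Ico 0 a := Ioo_subset_Ico_self hx
  refine add_pos_of_pos_of_nonneg (hpos 1 (by simp) x hx') (Finset.sum_nonneg fun i hi => ?_)
  have hci := hc i hi
  rw [Finset.mem_Icc] at hi
  have hDi := hpos i (Finset.mem_Icc.2 ⟨hi.1, by omega⟩) x hx'
  have hDi' := hpos (i + 1) (Finset.mem_Icc.2 ⟨by omega, by omega⟩) x hx'
  have hx0 := hx.1.le
  positivity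

end Ico

theorem bid_function_strictMono_of_deriv_pos_general
    (k n : ℕ) (hk : 3 ≤ k)
    (Q : ℝ → ℝ)
    (hQsmooth : ContDiffOn ℝ (k - 1 : ℕ) Q (Ico (0:ℝ) 1))
    (hQpos : ∀ i ∈ Finset.Icc 1 (k - 1), ∀ t ∈ Ico (0:ℝ) 1, 0 < iteratedDeriv i Q t) :
    StrictMonoOn (fun t => Q t + ∑ i ∈ Finset.Icc 1 (k - 2),
        ((k - 2).choose i : ℝ) * (((n - k).factorial : ℝ) / ((n - k + i).factorial : ℝ)) *
          t ^ i * iteratedDeriv i Q t)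
      (Ico (0:ℝ) 1) := by
  rw [show k - 1 = k - 2 + 1 by omega] at hQsmooth hQpos
  exact strictMonoOn_add_sum_mul_pow_mul_iteratedDeriv_Ico (fun i _ => by positivity)
    hQsmooth hQpos

/-- Corollary (sufficient condition): if all derivatives `Q^{(i)}`, `1 ≤ i ≤ k-1`,
are positive on `[0,1)`, then
`b(t) = Q(t) + Σ_{i=1}^{k-2} C(k-2,i) ((n-k)!/(n-k+i)!) t^i Q^{(i)}(t)` is
strictly increasing on `[0,1)`. -/
theorem bid_function_strictMono_of_deriv_pos
    (k n : ℕ) (hk : 3 ≤ k) (hkn : k < n)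
    (Q : ℝ → ℝ)
    (hQsmooth : ContDiffOn ℝ (k - 1 : ℕ) Q (Ico (0:ℝ) 1))
    (hQpos : ∀ i ∈ Finset.Icc 1 (k - 1), ∀ t ∈ Ico (0:ℝ) 1, 0 < iteratedDeriv i Q t) :
    StrictMonoOn (fun t => Q t + ∑ i ∈ Finset.Icc 1 (k - 2),
        ((k - 2).choose i : ℝ) * (((n - k).factorial : ℝ) / ((n - k + i).factorial : ℝ)) *
          t ^ i * iteratedDeriv i Q t)
      (Ico (0:ℝ) 1) :=
  bid_function_strictMono_of_deriv_pos_general k n hk Q hQsmooth hQpos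
end

section
/- Let k and n be integers with 3 ≤ k < n and let λ > 0. Define F(x) = 1 − exp(−λx) and f(x) = λ·exp(−λx) for x ≥ 0, and define β(x) = x + (1/λ)·Σ_{i=1}^{k−2} C(k−2,i) · ((n−k)!·(i−1)!/(n−k+i)!) · (exp(λx) − 1)^i. Then β is strictly increasing on [0,∞), and for every x ≥ 0, ∫₀^x (x − β(y))·F(y)^{n−k}·(F(x) − F(y))^{k−3}·f(y) dy = 0. -/
/-!
Substitute `t = F y` and `v = F x`, and write `m = n - k`, `p = k - 3`. As `λ x = -log (1 - v)` and
`λ y = -log (1 - t)`, the equation becomes, up to the factor `1 / λ`,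
`∫₀^v (c + log (1 - t) - S t) t^m (v - t)^p dt = 0`, where
`c = -log (1 - v)` and `S = bidCorrection m (p + 1)` is the sum in `β`, read in the variable `t`.
By Leibniz's rule the `(p + 1)`-st derivative of `G u = (c + log (1 - u)) u^(m + p + 1)` is
`(m + p + 1)! / m! · t^m (c + log (1 - t) - S t)`; this is where the coefficients of `β` come from.
Since `G` vanishes to order `m + p + 1 > p` at `0` and vanishes at `v`, Taylor's formula with
integral remainder gives `∫₀^v (v - t)^p G^(p+1)(t) dt = 0`.
-/

open MeasureTheory intervalIntegral Set
open Real Topology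
open scoped Nat

theorem Finset.sum_Icc_one_eq_sum_range {M : Type*} [AddCommMonoid M] (f : ℕ → M) (n : ℕ) :
    ∑ i ∈ Finset.Icc 1 n, f i = ∑ i ∈ Finset.range n, f (i + 1) := by
  rw [Finset.range_eq_Ico, Finset.sum_Ico_add' f 0 n 1, ← Finset.Ico_add_one_right_eq_Icc]

theorem Nat.cast_descFactorial_eq_div {K : Type*} [Field K] [CharZero K] {n k : ℕ} (h : k ≤ n) :
    (n.descFactorial k : K) = n ! / (n - k)! := by
  rw [Nat.descFactorial_eq_div h, Nat.cast_div (Nat.factorial_dvd_factorial (Nat.sub_le n k))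
    (Nat.cast_ne_zero.2 (Nat.factorial_ne_zero _))]

theorem integral_sub_pow_mul_iteratedDeriv_eq_zero {G : ℝ → ℝ} {a b : ℝ} {p : ℕ}
    (hG : ∀ t ∈ uIcc a b, ContDiffAt ℝ (p + 1) G t)
    (ha : ∀ j ≤ p, iteratedDeriv j G a = 0) (hb : G b = 0) :
    ∫ t in a..b, (b - t) ^ p * iteratedDeriv (p + 1) G t = 0 := by
  rcases eq_or_ne a b with rfl | hab
  · exact integral_same
  have hwithin : ∀ j ≤ p + 1, ∀ t ∈ uIcc a b,
      iteratedDerivWithin j G (uIcc a b) t = iteratedDeriv j G t := fun j hj t ht =>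
    iteratedDerivWithin_eq_iteratedDeriv (uniqueDiffOn_uIcc hab)
      ((hG t ht).of_le (by exact_mod_cast hj)) ht
  have htaylor := taylor_integral_remainder (fun t ht => (hG t ht).contDiffWithinAt)
  rw [taylor_within_apply, Finset.sum_eq_zero fun j hj => by
    rw [hwithin j (by simp at hj; omega) a left_mem_uIcc,
      ha j (by simpa [Nat.lt_succ_iff] using hj), smul_zero], hb, sub_zero, eq_comm] at htaylor
  calc ∫ t in a..b, (b - t) ^ p * iteratedDeriv (p + 1) G t
      = p ! * ∫ t in a..b, ((b - t) ^ p / p !) • iteratedDerivWithin (p + 1) G (uIcc a b) t := by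
        rw [← intervalIntegral.integral_const_mul]
        refine integral_congr fun t ht => ?_
        rw [hwithin (p + 1) le_rfl t ht, smul_eq_mul]
        field_simp
    _ = 0 := by rw [htaylor, mul_zero]

theorem iteratedDeriv_mul_pow {𝕜 : Type*} [NontriviallyNormedField 𝕜] {f : 𝕜 → 𝕜} {t : 𝕜}
    {j : ℕ} (M : ℕ) (hf : ContDiffAt 𝕜 j f t) :
    iteratedDeriv j (fun u => f u * u ^ M) t = ∑ i ∈ Finset.range (j + 1),
      j.choose i * iteratedDeriv i f t * (M.descFactorial (j - i) * t ^ (M - (j - i))) := by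
  rw [iteratedDeriv_fun_mul hf (show ContDiffAt 𝕜 j (fun u : 𝕜 => u ^ M) t by fun_prop)]
  simp only [iteratedDeriv_pow]

theorem iteratedDeriv_mul_pow_zero {𝕜 : Type*} [NontriviallyNormedField 𝕜] {f : 𝕜 → 𝕜}
    {j M : ℕ} (hjM : j < M) (hf : ContDiffAt 𝕜 j f 0) :
    iteratedDeriv j (fun u => f u * u ^ M) 0 = 0 := by
  rw [iteratedDeriv_mul_pow M hf]
  exact Finset.sum_eq_zero fun i _ => by rw [zero_pow (by omega), mul_zero, mul_zero]

theorem contDiffAt_const_add_log_one_sub (c : ℝ) {t : ℝ} (ht : t ≠ 1) {n : WithTop ℕ∞} :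
    ContDiffAt ℝ n (fun u => c + log (1 - u)) t :=
  contDiffAt_const.add ((contDiffAt_const.sub contDiffAt_id).log (sub_ne_zero.2 (Ne.symm ht)))

theorem iteratedDeriv_succ_log_one_sub {t : ℝ} (ht : t ≠ 1) (i : ℕ) :
    iteratedDeriv (i + 1) (fun u => log (1 - u)) t = -(i ! / (1 - t) ^ (i + 1)) := by
  have hderiv : deriv (fun u => log (1 - u)) =ᶠ[𝓝 t] fun u => (1 * u - 1)⁻¹ := by
    filter_upwards [isOpen_ne.mem_nhds ht] with u hu
    have h : HasDerivAt (fun u : ℝ => 1 - u) (-1) u := by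
      simpa using (hasDerivAt_id u).const_sub 1
    rw [(h.log (sub_ne_zero.2 (Ne.symm hu))).deriv, one_mul, ← neg_sub, neg_div_neg_eq, one_div]
  rw [iteratedDeriv_succ', hderiv.iteratedDeriv_eq, iteratedDeriv_eq_iterate,
    iter_deriv_inv_linear_sub]
  beta_reduce
  rw [show (-1 - i : ℤ) = -((i + 1 : ℕ) : ℤ) by push_cast; ring, zpow_neg, zpow_natCast,
    one_mul, one_pow, mul_one, ← neg_sub, neg_pow (1 - t), pow_succ (-1 : ℝ) i]
  have h1t : 1 - t ≠ 0 := sub_ne_zero.2 (Ne.symm ht)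
  field_simp

namespace KthPriceAuction

noncomputable def bidCorrection (m q : ℕ) (t : ℝ) : ℝ :=
  ∑ i ∈ Finset.Icc 1 q, (q.choose i : ℝ) * ((m ! : ℝ) * (i - 1)! / (m + i)!) * (t / (1 - t)) ^ i

theorem continuousAt_bidCorrection (m q : ℕ) {t : ℝ} (ht : t ≠ 1) :
    ContinuousAt (bidCorrection m q) t := by
  have h1t : 1 - t ≠ 0 := sub_ne_zero.2 (Ne.symm ht)
  unfold bidCorrection
  fun_prop (disch := exact h1t)

theorem bidCorrection_one_sub_exp_neg (m q : ℕ) (s : ℝ) :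
    bidCorrection m q (1 - exp (-s)) = ∑ i ∈ Finset.Icc 1 q,
      (q.choose i : ℝ) * ((m ! : ℝ) * (i - 1)! / (m + i)!) * (exp s - 1) ^ i := by
  have h : (1 - exp (-s)) / (1 - (1 - exp (-s))) = exp s - 1 := by
    rw [sub_sub_cancel, exp_neg]
    field_simp
  simp only [bidCorrection, h]

theorem iteratedDeriv_log_one_sub_mul_pow (c : ℝ) {t : ℝ} (ht : t ≠ 1) (m p : ℕ) :
    iteratedDeriv (p + 1) (fun u => (c + log (1 - u)) * u ^ (m + p + 1)) t =
      (m + p + 1)! / m ! * t ^ m * (c + log (1 - t) - bidCorrection m (p + 1) t) := by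
  have hterm : ∀ i ∈ Finset.range (p + 1),
      ((p + 1).choose (i + 1) : ℝ) * iteratedDeriv (i + 1) (fun u => c + log (1 - u)) t *
          ((m + p + 1).descFactorial (p + 1 - (i + 1)) * t ^ (m + p + 1 - (p + 1 - (i + 1)))) =
        -((m + p + 1)! / m ! * t ^ m * (((p + 1).choose (i + 1) : ℝ) *
          ((m ! : ℝ) * (i + 1 - 1)! / (m + (i + 1))!) * (t / (1 - t)) ^ (i + 1))) := by
    intro i hi
    rw [Finset.mem_range] at hi
    have h1t : 1 - t ≠ 0 := sub_ne_zero.2 (Ne.symm ht)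
    rw [iteratedDeriv_const_add (Nat.succ_pos i), iteratedDeriv_succ_log_one_sub ht,
      Nat.cast_descFactorial_eq_div (by omega : p + 1 - (i + 1) ≤ m + p + 1),
      show m + p + 1 - (p + 1 - (i + 1)) = m + (i + 1) by omega, Nat.add_sub_cancel, div_pow]
    field_simp
    ring
  rw [iteratedDeriv_mul_pow _ (contDiffAt_const_add_log_one_sub c ht), Finset.sum_range_succ',
    Finset.sum_congr rfl hterm, bidCorrection, Finset.sum_Icc_one_eq_sum_range,
    Finset.sum_neg_distrib, iteratedDeriv_zero]
  simp only [Nat.choose_zero_right, Nat.sub_zero, Nat.cast_one, one_mul]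
  rw [Nat.cast_descFactorial_eq_div (by omega), show m + p + 1 - (p + 1) = m by omega, mul_sub,
    Finset.mul_sum]
  ring

theorem integral_bidCorrection_eq_zero (m p : ℕ) {v : ℝ} (hv : v < 1) :
    ∫ t in (0 : ℝ)..v, (-log (1 - v) + log (1 - t) - bidCorrection m (p + 1) t) *
      t ^ m * (v - t) ^ p = 0 := by
  set c := -log (1 - v)
  have hlt : ∀ t ∈ uIcc 0 v, t ≠ 1 := fun t ht =>
    (ht.2.trans_lt (max_lt zero_lt_one hv)).ne
  have hG : ∀ t ∈ uIcc 0 v, ContDiffAt ℝ (p + 1)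
      (fun u => (c + log (1 - u)) * u ^ (m + p + 1)) t := fun t ht =>
    (contDiffAt_const_add_log_one_sub c (hlt t ht)).mul (contDiffAt_id.pow _)
  have htaylor := integral_sub_pow_mul_iteratedDeriv_eq_zero hG
    (fun j hj => iteratedDeriv_mul_pow_zero (by omega)
      (contDiffAt_const_add_log_one_sub c zero_ne_one))
    (by simp [c])
  have hintegrand : ∀ t ∈ uIcc 0 v,
      (v - t) ^ p * iteratedDeriv (p + 1) (fun u => (c + log (1 - u)) * u ^ (m + p + 1)) t =
        (m + p + 1)! / m ! * ((c + log (1 - t) - bidCorrection m (p + 1) t) * t ^ m * (v - t) ^ p) :=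
    fun t ht => by rw [iteratedDeriv_log_one_sub_mul_pow c (hlt t ht)]; ring
  rw [integral_congr hintegrand, intervalIntegral.integral_const_mul] at htaylor
  exact (mul_eq_zero.1 htaylor).resolve_left (by positivity)

theorem integral_bidCorrection_one_sub_exp_eq_zero (m p : ℕ) {lam : ℝ} (hlam : 0 < lam) (x : ℝ) :
    ∫ y in (0 : ℝ)..x,
      (x - (y + 1 / lam * bidCorrection m (p + 1) (1 - exp (-(lam * y))))) *
        (1 - exp (-(lam * y))) ^ m * (1 - exp (-(lam * x)) - (1 - exp (-(lam * y)))) ^ p *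
          (lam * exp (-(lam * y))) = 0 := by
  set v := 1 - exp (-(lam * x))
  set g : ℝ → ℝ := fun t =>
    1 / lam * ((-log (1 - v) + log (1 - t) - bidCorrection m (p + 1) t) * t ^ m * (v - t) ^ p)
  have hsubst : ∀ y ∈ uIcc 0 x,
      (x - (y + 1 / lam * bidCorrection m (p + 1) (1 - exp (-(lam * y))))) *
          (1 - exp (-(lam * y))) ^ m * (v - (1 - exp (-(lam * y)))) ^ p *
            (lam * exp (-(lam * y))) =
        (g ∘ fun y => 1 - exp (-(lam * y))) y * (lam * exp (-(lam * y))) := fun y _ => by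
    simp only [g, v, Function.comp, sub_sub_cancel, log_exp]
    generalize bidCorrection m (p + 1) (1 - exp (-(lam * y))) = S
    field_simp
    ring
  have hderiv : ∀ y ∈ uIcc 0 x,
      HasDerivAt (fun y => 1 - exp (-(lam * y))) (lam * exp (-(lam * y))) y := fun y _ => by
    simpa [mul_comm] using (((hasDerivAt_id y).const_mul lam).neg.exp).const_sub 1
  have hg : ContinuousOn g ((fun y => 1 - exp (-(lam * y))) '' uIcc 0 x) := by
    rintro _ ⟨y, -, rfl⟩
    have h1t : 1 - (1 - exp (-(lam * y))) ≠ 0 := by simp [(exp_pos _).ne']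
    have := continuousAt_bidCorrection m (p + 1) (sub_ne_zero.1 h1t).symm
    exact ContinuousAt.continuousWithinAt (by fun_prop (disch := exact h1t))
  rw [integral_congr hsubst, integral_comp_mul_deriv' hderiv (by fun_prop) hg]
  simp only [g, intervalIntegral.integral_const_mul, mul_zero, neg_zero, exp_zero, sub_self]
  exact mul_eq_zero_of_right _ (integral_bidCorrection_eq_zero _ _ (sub_lt_self 1 (exp_pos _)))

end KthPriceAuction

open KthPriceAuction

theorem kth_price_equilibrium_exponential_general
    (k n : ℕ) (hk : 3 ≤ k) (lam : ℝ) (hlam : 0 < lam)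
    (F f β : ℝ → ℝ)
    (hF : ∀ x : ℝ, 0 ≤ x → F x = 1 - Real.exp (-(lam * x)))
    (hf : ∀ x : ℝ, 0 ≤ x → f x = lam * Real.exp (-(lam * x)))
    (hβ : ∀ x : ℝ, 0 ≤ x → β x = x + (1 / lam) *
      ∑ i ∈ Finset.Icc 1 (k - 2),
        ((k - 2).choose i : ℝ) *
          (((n - k).factorial : ℝ) * ((i - 1).factorial : ℝ) / ((n - k + i).factorial : ℝ)) *
          (Real.exp (lam * x) - 1) ^ i) :
    StrictMonoOn β (Ici (0:ℝ)) ∧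
    ∀ x : ℝ, 0 ≤ x →
      ∫ y in (0:ℝ)..x,
        (x - β y) * F y ^ (n - k) * (F x - F y) ^ (k - 3) * f y = 0 := by
  have hp : k - 3 + 1 = k - 2 := by omega
  refine ⟨fun y hy z hz hyz => ?_, fun x hx => ?_⟩
  · rw [hβ y hy, hβ z hz]
    refine add_lt_add_of_lt_of_le hyz ?_
    gcongr
    exact sub_nonneg.2 (one_le_exp (mul_nonneg hlam.le hy))
  · refine (integral_congr fun y hy => ?_).trans
      (integral_bidCorrection_one_sub_exp_eq_zero (n - k) (k - 3) hlam x)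
    have hy0 : 0 ≤ y := (uIcc_of_le hx ▸ hy).1
    simp only [hF y hy0, hF x hx, hf y hy0, hβ y hy0, hp, bidCorrection_one_sub_exp_neg]

/-- Exponential distribution example: for `F x = 1 - e^{-λx}`, the bid function
`β x = x + (1/λ) Σ_{i=1}^{k-2} C(k-2,i) ((n-k)! (i-1)!/(n-k+i)!) (e^{λx}-1)^i`
is strictly increasing and satisfies the equilibrium equation of the `k`-th
price auction with `n` bidders. -/
theorem kth_price_equilibrium_exponential
    (k n : ℕ) (hk : 3 ≤ k) (hkn : k < n) (lam : ℝ) (hlam : 0 < lam)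
    (F f β : ℝ → ℝ)
    (hF : ∀ x : ℝ, 0 ≤ x → F x = 1 - Real.exp (-(lam * x)))
    (hf : ∀ x : ℝ, 0 ≤ x → f x = lam * Real.exp (-(lam * x)))
    (hβ : ∀ x : ℝ, 0 ≤ x → β x = x + (1 / lam) *
      ∑ i ∈ Finset.Icc 1 (k - 2),
        ((k - 2).choose i : ℝ) *
          (((n - k).factorial : ℝ) * ((i - 1).factorial : ℝ) / ((n - k + i).factorial : ℝ)) *
          (Real.exp (lam * x) - 1) ^ i) :
    StrictMonoOn β (Ici (0:ℝ)) ∧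
    ∀ x : ℝ, 0 ≤ x →
      ∫ y in (0:ℝ)..x,
        (x - β y) * F y ^ (n - k) * (F x - F y) ^ (k - 3) * f y = 0 :=
  kth_price_equilibrium_exponential_general k n hk lam hlam F f β hF hf hβ
end

section
/- Let k and n be integers with 3 ≤ k < n and let α > 0 be a real number. Define F(x) = x^α and f(x) = α·x^{α−1} for x ∈ [0,1], and define β(x) = (Γ(n−k+1)·Γ(n−1+1/α) / (Γ(n−1)·Γ(n−k+1+1/α))) · x, where Γ is the Gamma function. Then β is strictly increasing on [0,1], and for every x ∈ [0,1], ∫₀^x (x − β(y))·F(y)^{n−k}·(F(x) − F(y))^{k−3}·f(y) dy = 0. -/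
/-!
The substitution `v = (y / x) ^ α` turns the equilibrium integral into a positive multiple of
`∫₀¹ (1 - c v^(1/α)) v^(n-k) (1-v)^(k-3) dv = B(n-k+1, k-2) - c B(n-k+1+1/α, k-2)`,
where `c` is the slope of `β`. Writing `B(a, b) = Γ(a) Γ(b) / Γ(a + b)` shows that this slope is
exactly `B(n-k+1, k-2) / B(n-k+1+1/α, k-2)`, so the integral vanishes.
-/

open MeasureTheory intervalIntegral Set

open ProbabilityTheory

theorem integral_rpow_mul_one_sub_rpow {s t : ℝ} (hs : 0 < s) (ht : 0 < t) :
    ∫ u in (0:ℝ)..1, u ^ (s - 1) * (1 - u) ^ (t - 1) = beta s t := by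
  rw [beta_eq_betaIntegralReal s t hs ht, Complex.betaIntegral,
    ← Complex.ofReal_re (∫ _ in _.._, _), ← intervalIntegral.integral_ofReal]
  congr 1
  refine integral_congr fun u hu => ?_
  rw [uIcc_of_le zero_le_one] at hu
  push_cast
  rw [Complex.ofReal_cpow hu.1, Complex.ofReal_cpow (sub_nonneg.2 hu.2)]
  push_cast
  rfl

theorem integral_rpow_mul_pow_mul_one_sub_pow {r : ℝ} (hr : 0 ≤ r) (m p : ℕ) :
    ∫ v in (0:ℝ)..1, v ^ r * v ^ m * (1 - v) ^ p = beta (m + 1 + r) (p + 1) := by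
  rw [← integral_rpow_mul_one_sub_rpow (by positivity) (by positivity)]
  refine integral_congr fun v hv => ?_
  rw [uIcc_of_le zero_le_one] at hv
  have hexp : (m : ℝ) + 1 + r - 1 = r + m := by ring
  simp only [hexp, add_sub_cancel_right, Real.rpow_add_of_nonneg hv.1 hr m.cast_nonneg,
    Real.rpow_natCast]

theorem integral_one_sub_mul_rpow_mul_pow_mul_one_sub_pow_eq_zero {r : ℝ} (hr : 0 ≤ r)
    (m p : ℕ) :
    ∫ v in (0:ℝ)..1,
      (1 - beta (m + 1) (p + 1) / beta (m + 1 + r) (p + 1) * v ^ r) * v ^ m * (1 - v) ^ p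
      = 0 := by
  set c := beta (m + 1) (p + 1) / beta (m + 1 + r) (p + 1)
  have hcont (s : ℝ) (hs : 0 ≤ s) : Continuous fun v : ℝ => v ^ s * v ^ m * (1 - v) ^ p :=
    ((Real.continuous_rpow_const hs).mul (continuous_pow m)).mul
      ((continuous_const.sub continuous_id).pow p)
  calc _ = (∫ v in (0:ℝ)..1, v ^ (0:ℝ) * v ^ m * (1 - v) ^ p)
        - c * ∫ v in (0:ℝ)..1, v ^ r * v ^ m * (1 - v) ^ p := by
        rw [← intervalIntegral.integral_const_mul,
          ← integral_sub ((hcont 0 le_rfl).intervalIntegrable _ _)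
            (((hcont r hr).intervalIntegrable _ _).const_mul c)]
        refine integral_congr fun v _ => ?_
        simp only [Real.rpow_zero]
        ring
    _ = 0 := by
      rw [integral_rpow_mul_pow_mul_one_sub_pow le_rfl, integral_rpow_mul_pow_mul_one_sub_pow hr,
        add_zero, div_mul_cancel₀ _ (beta_pos (by positivity) (by positivity)).ne', sub_self]

theorem Gamma_mul_Gamma_div_eq_beta_div_beta {a b r : ℝ} (hb : 0 < b) (har : 0 < a + r) :
    Real.Gamma a * Real.Gamma (a + b + r) / (Real.Gamma (a + b) * Real.Gamma (a + r))
      = beta a b / beta (a + r) b := by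
  have := (Real.Gamma_pos_of_pos hb).ne'
  have := (Real.Gamma_pos_of_pos har).ne'
  rw [beta, beta, add_right_comm]
  field_simp

theorem integral_comp_rpow_div_rpow_mul_deriv {α x : ℝ} (hα : 0 < α) (hx : 0 < x)
    {φ : ℝ → ℝ} (hφ : Continuous φ) :
    ∫ y in (0:ℝ)..x, φ (y ^ α / x ^ α) * (α * y ^ (α - 1)) = x ^ α * ∫ v in (0:ℝ)..1, φ v := by
  have hxα : x ^ α ≠ 0 := (Real.rpow_pos_of_pos hx α).ne'
  have hf : Continuous fun y : ℝ => y ^ α / x ^ α :=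
    (Real.continuous_rpow_const hα.le).div_const _
  have hsub := integral_comp_mul_deriv''' (a := 0) (b := x) (g := φ)
    (f' := fun y => α * y ^ (α - 1) / x ^ α) hf.continuousOn (fun y hy => ?_) hφ.continuousOn
    (hφ.continuousOn.integrableOn_compact (isCompact_uIcc.image hf)) ?_
  · rw [Real.zero_rpow hα.ne', zero_div, div_self hxα] at hsub
    rw [← hsub, ← intervalIntegral.integral_const_mul]
    refine integral_congr fun y _ => ?_
    simp only [Function.comp]
    field_simp
  · rw [min_eq_left hx.le] at hy
    exact ((Real.hasDerivAt_rpow_const (Or.inl hy.1.ne')).div_const _).hasDerivWithinAt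
  · rw [← intervalIntegrable_iff']
    exact (((intervalIntegrable_rpow' (by linarith)).const_mul α).div_const _).continuousOn_mul
      (hφ.comp hf).continuousOn

theorem sub_mul_rpow_pow_mul_sub_rpow_pow_eq {α x y : ℝ} (hα : α ≠ 0) (hx : 0 < x) (hy : 0 ≤ y)
    (c : ℝ) (m p : ℕ) :
    (x - c * y) * (y ^ α) ^ m * (x ^ α - y ^ α) ^ p
      = x * (x ^ α) ^ (m + p) *
        ((1 - c * (y ^ α / x ^ α) ^ α⁻¹) * (y ^ α / x ^ α) ^ m * (1 - y ^ α / x ^ α) ^ p) := by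
  have hxα : x ^ α ≠ 0 := (Real.rpow_pos_of_pos hx α).ne'
  rw [← Real.div_rpow hy hx.le, Real.rpow_rpow_inv (div_nonneg hy hx.le) hα,
    Real.div_rpow hy hx.le, one_sub_div hxα, div_pow, div_pow]
  field_simp
  ring

/-- Polynomial distribution example: for `F x = x^α` on `[0,1]`, the linear bid
function `β x = (Γ(n-k+1) Γ(n-1+1/α) / (Γ(n-1) Γ(n-k+1+1/α))) x` is strictly
increasing and satisfies the equilibrium equation of the `k`-th price auction
with `n` bidders. -/
theorem kth_price_equilibrium_polynomial
    (k n : ℕ) (hk : 3 ≤ k) (hkn : k < n) (α : ℝ) (hα : 0 < α)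
    (F f β : ℝ → ℝ)
    (hF : ∀ x ∈ Icc (0:ℝ) 1, F x = x ^ α)
    (hf : ∀ x ∈ Icc (0:ℝ) 1, f x = α * x ^ (α - 1))
    (hβ : ∀ x ∈ Icc (0:ℝ) 1, β x =
      (Real.Gamma ((n : ℝ) - k + 1) * Real.Gamma ((n : ℝ) - 1 + 1 / α) /
        (Real.Gamma ((n : ℝ) - 1) * Real.Gamma ((n : ℝ) - k + 1 + 1 / α))) * x) :
    StrictMonoOn β (Icc (0:ℝ) 1) ∧
    ∀ x ∈ Icc (0:ℝ) 1,
      ∫ y in (0:ℝ)..x,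
        (x - β y) * F y ^ (n - k) * (F x - F y) ^ (k - 3) * f y = 0 := by
  have hc : Real.Gamma ((n : ℝ) - k + 1) * Real.Gamma ((n : ℝ) - 1 + 1 / α) /
      (Real.Gamma ((n : ℝ) - 1) * Real.Gamma ((n : ℝ) - k + 1 + 1 / α))
      = beta ((n - k : ℕ) + 1) ((k - 3 : ℕ) + 1) /
        beta ((n - k : ℕ) + 1 + α⁻¹) ((k - 3 : ℕ) + 1) := by
    rw [← Gamma_mul_Gamma_div_eq_beta_div_beta (by positivity) (by positivity)]
    push_cast [Nat.cast_sub hkn.le, Nat.cast_sub hk]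
    congr 3 <;> ring
  rw [hc] at hβ
  set c := beta ((n - k : ℕ) + 1) ((k - 3 : ℕ) + 1) /
    beta ((n - k : ℕ) + 1 + α⁻¹) ((k - 3 : ℕ) + 1)
  have hc_pos : 0 < c :=
    div_pos (beta_pos (by positivity) (by positivity)) (beta_pos (by positivity) (by positivity))
  refine ⟨fun a ha b hb hab => ?_, fun x hx => ?_⟩
  · rw [hβ a ha, hβ b hb]
    exact mul_lt_mul_of_pos_left hab hc_pos
  rcases hx.1.eq_or_lt with rfl | hx0
  · simp
  set ψ : ℝ → ℝ := fun v => (1 - c * v ^ α⁻¹) * v ^ (n - k) * (1 - v) ^ (k - 3)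
  have hψ : Continuous ψ :=
    ((continuous_const.sub (continuous_const.mul (Real.continuous_rpow_const
      (inv_nonneg.2 hα.le)))).mul (continuous_pow _)).mul
      ((continuous_const.sub continuous_id).pow _)
  calc _ = ∫ y in (0:ℝ)..x,
        x * (x ^ α) ^ (n - k + (k - 3)) * (ψ (y ^ α / x ^ α) * (α * y ^ (α - 1))) := by
        refine integral_congr fun y hy => ?_
        rw [uIcc_of_le hx.1] at hy
        have hy1 : y ∈ Icc (0:ℝ) 1 := ⟨hy.1, hy.2.trans hx.2⟩
        rw [hF y hy1, hF x hx, hf y hy1, hβ y hy1,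
          sub_mul_rpow_pow_mul_sub_rpow_pow_eq hα.ne' hx0 hy.1]
        ring
    _ = 0 := by
      rw [intervalIntegral.integral_const_mul, integral_comp_rpow_div_rpow_mul_deriv hα hx0 hψ,
        show ∫ v in (0:ℝ)..1, ψ v = 0 from
          integral_one_sub_mul_rpow_mul_pow_mul_one_sub_pow_eq_zero (inv_nonneg.2 hα.le) _ _,
        mul_zero, mul_zero]
end

section
/- Let k and n be integers with 3 ≤ k < n. Let F : ℝ → ℝ be infinitely differentiable on [0,1] with F(0) = 0, F(1) = 1 and f := F' strictly positive on [0,1], with quantile function Q, and let γ(t) = Q(t)·t^{n−2}. Define ψ_0(x) = ∫₀^x y·F(y)^{n−2}·f(y) dy and recursively ψ_{t+1}(x) = ψ_t'(x)/f(x). Then for every integer t ≥ 1 and every x ∈ (0,1), ψ_t(x) = γ^{(t−1)}(F(x)), where γ^{(t−1)} is the (t−1)-th derivative of γ. -/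
open MeasureTheory intervalIntegral Set Filter

lemma aux_iteratedDerivWithin_of_isOpen {g : ℝ → ℝ} {u : Set ℝ} (m : ℕ) (hu : IsOpen u)
    {s : ℝ} (hs : s ∈ u) : iteratedDerivWithin m g u s = iteratedDeriv m g s := by
  simp only [iteratedDerivWithin, iteratedDeriv, iteratedFDerivWithin_of_isOpen m hu hs]

lemma aux_hasDerivAt_iteratedDeriv {g : ℝ → ℝ} {u : Set ℝ} (hu : IsOpen u)
    (m : ℕ) (hg : ContDiffOn ℝ ((m + 1 : ℕ) : WithTop ℕ∞) g u) {s : ℝ} (hs : s ∈ u) :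
    HasDerivAt (iteratedDeriv m g) (iteratedDeriv (m + 1) g s) s := by
  have heq : iteratedDerivWithin m g u =ᶠ[nhds s] iteratedDeriv m g :=
    Filter.eventually_of_mem (hu.mem_nhds hs) fun y hy =>
      aux_iteratedDerivWithin_of_isOpen m hu hy
  have hdiff : DifferentiableAt ℝ (iteratedDeriv m g) s := by
    have h1 : DifferentiableWithinAt ℝ (iteratedDerivWithin m g u) u s :=
      hg.differentiableOn_iteratedDerivWithin (by exact_mod_cast (show m < m + 1 by omega))
        hu.uniqueDiffOn s hs
    have h2 : DifferentiableAt ℝ (iteratedDerivWithin m g u) s :=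
      h1.differentiableAt (hu.mem_nhds hs)
    exact (Filter.EventuallyEq.differentiableAt_iff heq).1 h2
  rw [iteratedDeriv_succ]
  exact hdiff.hasDerivAt

/-- Nawar and Sen's functions `ψ_t` coincide with the iterated derivatives of
`γ(t) = Q(t) t^{n-2}` evaluated at `F x`: `ψ_t(x) = γ^{(t-1)}(F x)` for `t ≥ 1`. -/
theorem psi_eq_iteratedDeriv_gamma
    (k n : ℕ) (hk : 3 ≤ k) (hkn : k < n)
    (F f Q : ℝ → ℝ)
    (hF0 : F 0 = 0) (hF1 : F 1 = 1)
    (hFsmooth : ContDiffOn ℝ (⊤ : ℕ∞) F (Icc (0:ℝ) 1))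
    (hFderiv : ∀ x ∈ Icc (0:ℝ) 1, HasDerivAt F (f x) x)
    (hfpos : ∀ x ∈ Icc (0:ℝ) 1, 0 < f x)
    (hQF : ∀ x ∈ Icc (0:ℝ) 1, Q (F x) = x)
    (hFQ : ∀ t ∈ Icc (0:ℝ) 1, F (Q t) = t)
    (ψ : ℕ → ℝ → ℝ)
    (hψ0 : ∀ x : ℝ, ψ 0 x = ∫ y in (0:ℝ)..x, y * F y ^ (n - 2) * f y)
    (hψsucc : ∀ (t : ℕ) (x : ℝ), ψ (t + 1) x = deriv (ψ t) x / f x) :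
    ∀ t : ℕ, 1 ≤ t → ∀ x ∈ Ioo (0:ℝ) 1,
      ψ t x = iteratedDeriv (t - 1) (fun s => Q s * s ^ (n - 2)) (F x) := by
  set γ : ℝ → ℝ := fun s => Q s * s ^ (n - 2) with hγdef
  have hIccNhds : ∀ x ∈ Ioo (0:ℝ) 1, Icc (0:ℝ) 1 ∈ nhds x := fun x hx =>
    Filter.mem_of_superset (isOpen_Ioo.mem_nhds hx) Ioo_subset_Icc_self
  have hFc : ContinuousOn F (Icc (0:ℝ) 1) := hFsmooth.continuousOn
  -- continuity of f
  have hfc : ContinuousOn f (Icc (0:ℝ) 1) := by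
    have hud : UniqueDiffOn ℝ (Icc (0:ℝ) 1) := uniqueDiffOn_Icc (by norm_num)
    have : ContinuousOn (derivWithin F (Icc (0:ℝ) 1)) (Icc (0:ℝ) 1) := by
      apply hFsmooth.continuousOn_derivWithin hud
      exact (by simp)
    apply this.congr
    intro x hx
    exact ((hFderiv x hx).hasDerivWithinAt.derivWithin (hud x hx)).symm
  -- F strictly monotone on Icc
  have hmono : StrictMonoOn F (Icc (0:ℝ) 1) := by
    apply strictMonoOn_of_deriv_pos (convex_Icc 0 1) hFc
    intro x hx
    rw [interior_Icc] at hx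
    rw [(hFderiv x (Ioo_subset_Icc_self hx)).deriv]
    exact hfpos x (Ioo_subset_Icc_self hx)
  have hinj : InjOn F (Icc (0:ℝ) 1) := hmono.injOn
  -- Q maps Icc into Icc
  have hQmem : ∀ y ∈ Icc (0:ℝ) 1, Q y ∈ Icc (0:ℝ) 1 := by
    intro y hy
    obtain ⟨z, hz, hzy⟩ := intermediate_value_Icc (by norm_num : (0:ℝ) ≤ 1) hFc
      (by rw [hF0, hF1]; exact hy)
    rw [← hzy, hQF z hz]
    exact hz
  -- F maps Ioo into Ioo
  have hFmem : ∀ x ∈ Ioo (0:ℝ) 1, F x ∈ Ioo (0:ℝ) 1 := by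
    intro x hx
    constructor
    · rw [← hF0]
      exact hmono (left_mem_Icc.2 (by norm_num)) (Ioo_subset_Icc_self hx) hx.1
    · rw [← hF1]
      exact hmono (Ioo_subset_Icc_self hx) (right_mem_Icc.2 (by norm_num)) hx.2
  -- key smoothness: near F x, γ is smooth, and iterated derivatives behave
  have hkey : ∀ x ∈ Ioo (0:ℝ) 1, ∀ m : ℕ,
      HasDerivAt (iteratedDeriv m γ) (iteratedDeriv (m + 1) γ (F x)) (F x) := by
    intro x hx
    have hx1 : x ∈ Icc (0:ℝ) 1 := Ioo_subset_Icc_self hx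
    have hne : f x ≠ 0 := (hfpos x hx1).ne'
    have hFat : ContDiffAt ℝ (⊤ : ℕ∞) F x := hFsmooth.contDiffAt (hIccNhds x hx)
    have hfd : HasFDerivAt F
        (ContinuousLinearEquiv.unitsEquivAut ℝ (Units.mk0 (f x) hne) : ℝ →L[ℝ] ℝ) x :=
      (hFderiv x hx1).hasFDerivAt_equiv hne
    have hQloc : ContDiffAt ℝ (⊤ : ℕ∞) (hFat.localInverse hfd (by simp)) (F x) :=
      hFat.to_localInverse hfd (by simp)
    set g : ℝ → ℝ := hFat.localInverse hfd (by simp) with hgdef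
    have hgx : g (F x) = x := hFat.localInverse_apply_image hfd (by simp)
    have hright : ∀ᶠ y in nhds (F x), F (g y) = y :=
      (hFat.hasStrictFDerivAt' hfd (by simp)).eventually_right_inverse
    have hgIoo : ∀ᶠ y in nhds (F x), g y ∈ Ioo (0:ℝ) 1 := by
      have := hQloc.continuousAt (x := F x)
      have h2 : Ioo (0:ℝ) 1 ∈ nhds (g (F x)) := by
        rw [hgx]; exact isOpen_Ioo.mem_nhds hx
      exact this h2
    have hyIcc : ∀ᶠ y in nhds (F x), y ∈ Icc (0:ℝ) 1 :=
      Filter.eventually_of_mem (isOpen_Ioo.mem_nhds (hFmem x hx)) fun y hy =>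
        Ioo_subset_Icc_self hy
    have hQeq : Q =ᶠ[nhds (F x)] g := by
      filter_upwards [hright, hgIoo, hyIcc] with y h1 h2 h3
      apply hinj (hQmem y h3) (Ioo_subset_Icc_self h2)
      rw [hFQ y h3, h1]
    have hQ : ContDiffAt ℝ (⊤ : ℕ∞) Q (F x) := hQloc.congr_of_eventuallyEq hQeq
    have hγsm : ContDiffAt ℝ (⊤ : ℕ∞) γ (F x) := hQ.mul ((contDiffAt_id).pow (n - 2))
    intro m
    obtain ⟨u, hu_nhds, hu⟩ := hγsm.contDiffOn (m := ((m + 1 : ℕ) : WithTop ℕ∞))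
      (by exact_mod_cast le_top) (by simp)
    exact aux_hasDerivAt_iteratedDeriv isOpen_interior m
      (hu.mono interior_subset) (mem_interior_iff_mem_nhds.2 hu_nhds)
  -- base case value: ψ 1 x = x * F x ^ (n-2)
  have hψ1 : ∀ x ∈ Ioo (0:ℝ) 1, ψ 1 x = γ (F x) := by
    intro x hx
    have hx1 : x ∈ Icc (0:ℝ) 1 := Ioo_subset_Icc_self hx
    have hcont : ContinuousOn (fun y => y * F y ^ (n - 2) * f y) (Icc (0:ℝ) 1) :=
      ((continuousOn_id.mul (hFc.pow _)).mul hfc)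
    have hint : IntervalIntegrable (fun y => y * F y ^ (n - 2) * f y) volume 0 x := by
      apply ContinuousOn.intervalIntegrable
      apply hcont.mono
      rw [uIcc_of_le hx.1.le]
      exact Icc_subset_Icc le_rfl hx.2.le
    have hca : ContinuousAt (fun y => y * F y ^ (n - 2) * f y) x :=
      hcont.continuousAt (hIccNhds x hx)
    have hd : HasDerivAt (fun z => ∫ y in (0:ℝ)..z, y * F y ^ (n - 2) * f y)
        (x * F x ^ (n - 2) * f x) x :=
      intervalIntegral.integral_hasDerivAt_right hint
        (ContinuousOn.stronglyMeasurableAtFilter isOpen_Ioo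
          (hcont.mono Ioo_subset_Icc_self) x hx) hca
    have hd2 : HasDerivAt (ψ 0) (x * F x ^ (n - 2) * f x) x := by
      apply hd.congr_of_eventuallyEq
      filter_upwards with y
      exact hψ0 y
    rw [hψsucc 0 x, hd2.deriv]
    show x * F x ^ (n - 2) * f x / f x = Q (F x) * (F x) ^ (n - 2)
    rw [hQF x hx1, mul_div_assoc, div_self (hfpos x hx1).ne', mul_one]
  -- main induction
  intro t ht
  induction t, ht using Nat.le_induction with
  | base =>
    intro x hx
    simpa [iteratedDeriv_zero] using hψ1 x hx
  | succ t ht ih =>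
    intro x hx
    have hx1 : x ∈ Icc (0:ℝ) 1 := Ioo_subset_Icc_self hx
    have hne : f x ≠ 0 := (hfpos x hx1).ne'
    have hcomp : HasDerivAt (fun z => iteratedDeriv (t - 1) γ (F z))
        (iteratedDeriv (t - 1 + 1) γ (F x) * f x) x :=
      (hkey x hx (t - 1)).comp x (hFderiv x hx1)
    have heq : ψ t =ᶠ[nhds x] fun z => iteratedDeriv (t - 1) γ (F z) :=
      Filter.eventually_of_mem (isOpen_Ioo.mem_nhds hx) fun z hz => ih z hz
    have hderiv : deriv (ψ t) x = iteratedDeriv (t - 1 + 1) γ (F x) * f x := by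
      rw [Filter.EventuallyEq.deriv_eq heq, hcomp.deriv]
    rw [hψsucc t x, hderiv]
    have ht' : t - 1 + 1 = t := Nat.succ_pred_eq_of_pos ht
    rw [ht']
    have : t + 1 - 1 = t := rfl
    rw [this, mul_div_assoc, div_self hne, mul_one]
end
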